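/- For every k exceeding the number of nodes of the finite graph G, every graded μ-calculus formula φ is globally k-stable on (G, V) and its uniform k-approximation equals its true semantics, for every valuation V. -/

import Mathlib

/-- Formulas of the graded modal μ-calculus in negation normal form, over
proposition symbols `P` and variables `X`. -/
inductive Form (P X : Type) : Type
  | prop : P → Form P X
  | nprop : P → Form P X
  | var : X → Form P X
  | and : Form P X → Form P X → Form P X
  | or : Form P X → Form P X → Form P X
  | dia : ℕ → Form P X → Form P X   -- ◇_k φ : at least k out-neighbours satisfy φ
  | box : ℕ → Form P X → Form P X   -- □_k φ : strictly fewer than k out-neighbours fail φ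
  | mu : X → Form P X → Form P X
  | nu : X → Form P X → Form P X

variable {P X N : Type} [DecidableEq X]

/-- Iteration of a set operator from a given starting set. -/
def fpIter (f : Set N → Set N) (init : Set N) : ℕ → Set N
  | 0 => init
  | i + 1 => f (fpIter f init i)

/-- True (Knaster–Tarski) semantics of μ-calculus formulas on a graph with
edge relation `E` and labeling `lab`, under valuation `V`. -/
def sem (E : N → N → Prop) (lab : N → P → Prop) : Form P X → (X → Set N) → Set N
  | .prop p, _ => {n | lab n p}
  | .nprop p, _ => {n | ¬ lab n p}
  | .var x, V => V x
  | .and φ ψ, V => sem E lab φ V ∩ sem E lab ψ V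
  | .or φ ψ, V => sem E lab φ V ∪ sem E lab ψ V
  | .dia c φ, V => {n | c ≤ ({m | E n m} ∩ sem E lab φ V).ncard}
  | .box c φ, V => {n | ({m | E n m} \ sem E lab φ V).ncard < c}
  | .mu x φ, V => ⋂₀ {S | sem E lab φ (Function.update V x S) ⊆ S}
  | .nu x φ, V => ⋃₀ {S | S ⊆ sem E lab φ (Function.update V x S)}

/-- Uniform `k`-approximation semantics: every fixpoint is iterated exactly `k`
times (least fixpoints from `∅`, greatest fixpoints from `univ`). -/
def asem (E : N → N → Prop) (lab : N → P → Prop) (k : ℕ) :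
    Form P X → (X → Set N) → Set N
  | .prop p, _ => {n | lab n p}
  | .nprop p, _ => {n | ¬ lab n p}
  | .var x, V => V x
  | .and φ ψ, V => asem E lab k φ V ∩ asem E lab k ψ V
  | .or φ ψ, V => asem E lab k φ V ∪ asem E lab k ψ V
  | .dia c φ, V => {n | c ≤ ({m | E n m} ∩ asem E lab k φ V).ncard}
  | .box c φ, V => {n | ({m | E n m} \ asem E lab k φ V).ncard < c}
  | .mu x φ, V => fpIter (fun S => asem E lab k φ (Function.update V x S)) ∅ k
  | .nu x φ, V => fpIter (fun S => asem E lab k φ (Function.update V x S)) Set.univ k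

/-- Free variables of a formula. -/
def freeVars : Form P X → Set X
  | .prop _ => ∅
  | .nprop _ => ∅
  | .var x => {x}
  | .and φ ψ => freeVars φ ∪ freeVars ψ
  | .or φ ψ => freeVars φ ∪ freeVars ψ
  | .dia _ φ => freeVars φ
  | .box _ φ => freeVars φ
  | .mu x φ => freeVars φ \ {x}
  | .nu x φ => freeVars φ \ {x}

/-- Pointwise `k`-stability of a formula on `(G, V, n)`. -/
def stableAt (E : N → N → Prop) (lab : N → P → Prop) (k : ℕ) :
    Form P X → (X → Set N) → N → Prop
  | .prop _, _, _ => True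
  | .nprop _, _, _ => True
  | .var _, _, _ => True
  | .and φ ψ, V, n => stableAt E lab k φ V n ∧ stableAt E lab k ψ V n
  | .or φ ψ, V, n => stableAt E lab k φ V n ∧ stableAt E lab k ψ V n
  | .dia _ φ, V, n => stableAt E lab k φ V n
  | .box _ φ, V, n => stableAt E lab k φ V n
  | .mu x ψ, V, n =>
      ((n ∈ fpIter (fun S => asem E lab k ψ (Function.update V x S)) ∅ k) ↔
        (n ∈ fpIter (fun S => asem E lab k ψ (Function.update V x S)) ∅ (k - 1))) ∧
      ∀ i < k, stableAt E lab k ψ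
        (Function.update V x
          (fpIter (fun S => asem E lab k ψ (Function.update V x S)) ∅ i)) n
  | .nu x ψ, V, n =>
      ((n ∈ fpIter (fun S => asem E lab k ψ (Function.update V x S)) Set.univ k) ↔
        (n ∈ fpIter (fun S => asem E lab k ψ (Function.update V x S)) Set.univ (k - 1))) ∧
      ∀ i < k, stableAt E lab k ψ
        (Function.update V x
          (fpIter (fun S => asem E lab k ψ (Function.update V x S)) Set.univ i)) n

/-- Global `k`-stability of a formula on `(G, V)`. -/
def gStable (E : N → N → Prop) (lab : N → P → Prop) (k : ℕ) :
    Form P X → (X → Set N) → Prop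
  | .prop _, _ => True
  | .nprop _, _ => True
  | .var _, _ => True
  | .and φ ψ, V => gStable E lab k φ V ∧ gStable E lab k ψ V
  | .or φ ψ, V => gStable E lab k φ V ∧ gStable E lab k ψ V
  | .dia _ φ, V => gStable E lab k φ V
  | .box _ φ, V => gStable E lab k φ V
  | .mu x ψ, V =>
      fpIter (fun S => asem E lab k ψ (Function.update V x S)) ∅ k =
        fpIter (fun S => asem E lab k ψ (Function.update V x S)) ∅ (k - 1) ∧
      ∀ i < k, gStable E lab k ψ
        (Function.update V x
          (fpIter (fun S => asem E lab k ψ (Function.update V x S)) ∅ i))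
  | .nu x ψ, V =>
      fpIter (fun S => asem E lab k ψ (Function.update V x S)) Set.univ k =
        fpIter (fun S => asem E lab k ψ (Function.update V x S)) Set.univ (k - 1) ∧
      ∀ i < k, gStable E lab k ψ
        (Function.update V x
          (fpIter (fun S => asem E lab k ψ (Function.update V x S)) Set.univ i))

/-- `(j,k)`-stability of a fixpoint formula on `(G, V, n)` (trivially true on
non-fixpoint formulas). -/
def jkStable (E : N → N → Prop) (lab : N → P → Prop) (j k : ℕ) :
    Form P X → (X → Set N) → N → Prop
  | .mu x ψ, V, n =>
      ∀ i < j, stableAt E lab k ψ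
        (Function.update V x
          (fpIter (fun S => asem E lab k ψ (Function.update V x S)) ∅ i)) n
  | .nu x ψ, V, n =>
      ∀ i < j, stableAt E lab k ψ
        (Function.update V x
          (fpIter (fun S => asem E lab k ψ (Function.update V x S)) Set.univ i)) n
  | _, _, _ => True

/-! On a graph with `n` nodes, the iterates of a monotone operator on node sets, started from `∅`
(resp. from all nodes), grow (resp. shrink) strictly until they become stationary, so they reach
the least (resp. greatest) fixpoint after at most `n` steps. The approximation semantics is
monotone in the valuation, so every fixpoint body is a monotone operator; by induction on the
formula, once `k > n` the `k`-th and `(k - 1)`-th iterates of every fixpoint both equal the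
Knaster–Tarski fixpoint of the true semantics of its body. -/

open Function

namespace OrderHom

variable {α : Type*} [CompleteLattice α] (f : α →o α)

theorem iterate_bot_le_lfp (n : ℕ) : f^[n] ⊥ ≤ f.lfp := by
  induction n with
  | zero => exact bot_le
  | succ n ih => rw [iterate_succ_apply']; exact map_le_lfp f ih

theorem iterate_bot_eq_lfp_of_isFixedPt {i n : ℕ} (hi : IsFixedPt f (f^[i] ⊥))
    (hn : i ≤ n) : f^[n] ⊥ = f.lfp := by
  obtain ⟨d, rfl⟩ := Nat.exists_eq_add_of_le hn
  rw [add_comm, iterate_add_apply, iterate_fixed hi]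
  exact le_antisymm (iterate_bot_le_lfp f i) (lfp_le_fixed f hi)

theorem iterate_top_eq_gfp_of_isFixedPt {i n : ℕ} (hi : IsFixedPt f (f^[i] ⊤))
    (hn : i ≤ n) : f^[n] ⊤ = f.gfp :=
  f.dual.iterate_bot_eq_lfp_of_isFixedPt hi hn

end OrderHom

namespace Set

variable {N : Type*} [Finite N]

theorem exists_le_card_succ_eq_of_monotone {s : ℕ → Set N} (hs : Monotone s) :
    ∃ i ≤ Nat.card N, s (i + 1) = s i := by
  by_contra! h
  have hgrow : ∀ i ≤ Nat.card N + 1, i ≤ (s i).ncard := by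
    intro i
    induction i with
    | zero => intro _; exact Nat.zero_le _
    | succ i ih =>
      intro hi
      have hsub : s i ⊆ s (i + 1) := hs (Nat.le_succ i)
      have hlt := ncard_lt_ncard (hsub.ssubset_of_ne (h i (by omega)).symm)
      have := ih (by omega)
      omega
  have := hgrow _ le_rfl
  have := ncard_le_card (s (Nat.card N + 1))
  omega

theorem exists_le_card_succ_eq_of_antitone {s : ℕ → Set N} (hs : Antitone s) :
    ∃ i ≤ Nat.card N, s (i + 1) = s i := by
  obtain ⟨i, hi, heq⟩ :=
    exists_le_card_succ_eq_of_monotone (s := fun i => (s i)ᶜ) fun _ _ h =>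
      compl_subset_compl.2 (hs h)
  exact ⟨i, hi, compl_inj_iff.1 heq⟩

end Set

namespace OrderHom

variable {N : Type*} [Finite N] (f : Set N →o Set N)

theorem iterate_empty_eq_lfp {n : ℕ} (hn : Nat.card N ≤ n) : f^[n] ∅ = f.lfp := by
  obtain ⟨i, hi, hfix⟩ := Set.exists_le_card_succ_eq_of_monotone
    (f.monotone.monotone_iterate_of_le_map (Set.empty_subset (f ∅)))
  rw [iterate_succ_apply'] at hfix
  exact f.iterate_bot_eq_lfp_of_isFixedPt hfix (hi.trans hn)

theorem iterate_univ_eq_gfp {n : ℕ} (hn : Nat.card N ≤ n) : f^[n] Set.univ = f.gfp := by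
  obtain ⟨i, hi, hfix⟩ := Set.exists_le_card_succ_eq_of_antitone
    (f.monotone.antitone_iterate_of_map_le (Set.subset_univ (f Set.univ)))
  rw [iterate_succ_apply'] at hfix
  rw [← Set.top_eq_univ] at hfix ⊢
  exact f.iterate_top_eq_gfp_of_isFixedPt hfix (hi.trans hn)

end OrderHom

theorem fpIter_eq_iterate (f : Set N → Set N) (init : Set N) (i : ℕ) :
    fpIter f init i = f^[i] init := by
  induction i with
  | zero => rfl
  | succ i ih => rw [iterate_succ_apply', ← ih]; rfl

section Approximation

variable [Finite N] (E : N → N → Prop) (lab : N → P → Prop) (k : ℕ)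

theorem asem_monotone (φ : Form P X) : Monotone (asem E lab k φ) := by
  induction φ with
  | prop _ | nprop _ => exact fun _ _ _ => le_rfl
  | var x => exact fun _ _ h => h x
  | and φ ψ ihφ ihψ => exact fun _ _ h => Set.inter_subset_inter (ihφ h) (ihψ h)
  | or φ ψ ihφ ihψ => exact fun _ _ h => Set.union_subset_union (ihφ h) (ihψ h)
  | dia c φ ih =>
    exact fun _ _ h _ hn =>
      hn.trans (Set.ncard_le_ncard (Set.inter_subset_inter_right _ (ih h)))
  | box c φ ih =>
    exact fun _ _ h _ hn =>
      (Set.ncard_le_ncard (Set.sdiff_subset_sdiff_right (ih h))).trans_lt hn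
  | mu x ψ ih | nu x ψ ih =>
    intro V W h
    simp only [asem, fpIter_eq_iterate]
    exact (ih.comp update_mono).iterate_le_of_le
      (fun S => ih (update_le_update_iff.2 ⟨le_rfl, fun y _ => h y⟩)) k _

theorem fpIter_asem_eq_sInter {n : ℕ} (hn : Nat.card N ≤ n) (ψ : Form P X) (x : X)
    (V : X → Set N) :
    fpIter (fun S => asem E lab k ψ (update V x S)) ∅ n =
      ⋂₀ {S | asem E lab k ψ (update V x S) ⊆ S} := by
  rw [fpIter_eq_iterate]
  -- `OrderHom.lfp` on `Set N` unfolds to this intersection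
  exact OrderHom.iterate_empty_eq_lfp ⟨_, (asem_monotone E lab k ψ).comp update_mono⟩ hn

theorem fpIter_asem_eq_sUnion {n : ℕ} (hn : Nat.card N ≤ n) (ψ : Form P X) (x : X)
    (V : X → Set N) :
    fpIter (fun S => asem E lab k ψ (update V x S)) Set.univ n =
      ⋃₀ {S | S ⊆ asem E lab k ψ (update V x S)} := by
  rw [fpIter_eq_iterate]
  exact OrderHom.iterate_univ_eq_gfp ⟨_, (asem_monotone E lab k ψ).comp update_mono⟩ hn

theorem gStable_mu_and_asem_eq (hk : Nat.card N < k) {ψ : Form P X}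
    (ih : ∀ V, gStable E lab k ψ V ∧ asem E lab k ψ V = sem E lab ψ V) (x : X)
    (V : X → Set N) :
    gStable E lab k (.mu x ψ) V ∧ asem E lab k (.mu x ψ) V = sem E lab (.mu x ψ) V := by
  have hlfp := fun n (hn : Nat.card N ≤ n) => fpIter_asem_eq_sInter E lab k hn ψ x V
  have hψ : asem E lab k ψ = sem E lab ψ := funext fun W => (ih W).2
  refine ⟨⟨(hlfp k hk.le).trans (hlfp (k - 1) (by omega)).symm, fun i _ => (ih _).1⟩, ?_⟩
  rw [asem, hlfp k hk.le, sem, hψ]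

theorem gStable_nu_and_asem_eq (hk : Nat.card N < k) {ψ : Form P X}
    (ih : ∀ V, gStable E lab k ψ V ∧ asem E lab k ψ V = sem E lab ψ V) (x : X)
    (V : X → Set N) :
    gStable E lab k (.nu x ψ) V ∧ asem E lab k (.nu x ψ) V = sem E lab (.nu x ψ) V := by
  have hgfp := fun n (hn : Nat.card N ≤ n) => fpIter_asem_eq_sUnion E lab k hn ψ x V
  have hψ : asem E lab k ψ = sem E lab ψ := funext fun W => (ih W).2
  refine ⟨⟨(hgfp k hk.le).trans (hgfp (k - 1) (by omega)).symm, fun i _ => (ih _).1⟩, ?_⟩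
  rw [asem, hgfp k hk.le, sem, hψ]

end Approximation

/-- For `k` larger than the number of nodes, every formula is globally `k`-stable
and its uniform `k`-approximation equals its true semantics, for every valuation. -/
theorem gStable_of_card_lt [Fintype N] (E : N → N → Prop) (lab : N → P → Prop)
    (k : ℕ) (hk : Fintype.card N < k) (φ : Form P X) :
    ∀ V : X → Set N, gStable E lab k φ V ∧ asem E lab k φ V = sem E lab φ V := by
  rw [← Nat.card_eq_fintype_card] at hk
  induction φ with
  | prop _ | nprop _ | var _ => exact fun _ => ⟨trivial, rfl⟩
  | and φ ψ ihφ ihψ | or φ ψ ihφ ihψ =>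
    intro V
    exact ⟨⟨(ihφ V).1, (ihψ V).1⟩, by rw [asem, sem, (ihφ V).2, (ihψ V).2]⟩
  | dia c φ ih | box c φ ih =>
    exact fun V => ⟨(ih V).1, by rw [asem, sem, (ih V).2]⟩
  | mu x ψ ih => exact gStable_mu_and_asem_eq E lab k hk ih x
  | nu x ψ ih => exact gStable_nu_and_asem_eq E lab k hk ih x
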